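/- arXiv:1804.06187 — 2 statements merged into one kernel-verified Lean document; each statement's English description precedes it below -/
import Mathlib

section
/- Bayes: for events E, H, A with P(A∩H) > 0, the conjunction satisfies ⟦(E|(A∩H))∧(H|A)⟧(ω) = ⟦(E∩H)|A⟧(ω) for every ω ∈ Ω; moreover, if P(A∩E∩H) > 0, then the iterated conditional satisfies ⟦(H|(E∩A))|((E∩H)|A)⟧(ω) = 1 for every ω ∈ Ω. -/
/-!
On `A`, the random quantity `min(⟦E|A∩H⟧, ⟦H|A⟧)` is the indicator of `E ∩ H`, and so is
`min(⟦(E∩H)|A⟧, ⟦H|(E∩A)⟧)`, because `E ∩ H ∩ A ⊆ H ∩ (E ∩ A)`. Integrating, both conjunctions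
have prevision `P(E∩H|A)`, hence both coincide with the conditional event `(E∩H)|A`. The iterated
conditional is then `⟦(E∩H)|A⟧ + (1 - ⟦(E∩H)|A⟧) = 1`.
-/

open MeasureTheory Set
open scoped Classical

noncomputable section

variable {Ω : Type*} [MeasurableSpace Ω]

/-- Indicator (with values in `ℝ`) of a set. -/
def ind (A : Set Ω) : Ω → ℝ := A.indicator 1

/-- Conditional probability `P(A|H) = P(A ∩ H)/P(H)`. -/
def condProb (P : Measure Ω) (A H : Set Ω) : ℝ :=
  (P (A ∩ H)).toReal / (P H).toReal

/-- The (indicator of the) conditional event `A|H`,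
`⟦A|H⟧ = 1_{A∩H} + P(A|H)·1_{Hᶜ}`. -/
def condEvent (P : Measure Ω) (A H : Set Ω) : Ω → ℝ :=
  fun ω => ind (A ∩ H) ω + condProb P A H * ind Hᶜ ω

/-- The prevision `z` of the conjunction `(A|H) ∧ (B|K)`:
`z = E[min(⟦A|H⟧, ⟦B|K⟧)·1_{H∪K}]/P(H∪K)`. -/
def conjPrev (P : Measure Ω) (A H B K : Set Ω) : ℝ :=
  (∫ ω, min (condEvent P A H ω) (condEvent P B K ω) * ind (H ∪ K) ω ∂P) /
    (P (H ∪ K)).toReal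

/-- The conjunction `⟦(A|H) ∧ (B|K)⟧ = min(⟦A|H⟧, ⟦B|K⟧)·1_{H∪K} + z·1_{(H∪K)ᶜ}`. -/
def conjCE (P : Measure Ω) (A H B K : Set Ω) : Ω → ℝ :=
  fun ω => min (condEvent P A H ω) (condEvent P B K ω) * ind (H ∪ K) ω
    + conjPrev P A H B K * ind (H ∪ K)ᶜ ω

/-- The iterated conditional `⟦(B|K)|(A|H)⟧ = ⟦(A|H)∧(B|K)⟧ + μ·(1 − ⟦A|H⟧)`,
with `μ = z / P(A|H)`. -/
def iterCond (P : Measure Ω) (A H B K : Set Ω) : Ω → ℝ :=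
  fun ω => conjCE P A H B K ω +
    (conjPrev P A H B K / condProb P A H) * (1 - condEvent P A H ω)

/-- Goodman–Nguyen logical implication between conditional events:
`A|H ⊑ B|K` iff `A∩H ⊆ B∩K` and `Bᶜ∩K ⊆ Aᶜ∩H`. -/
def GNle (A H B K : Set Ω) : Prop := A ∩ H ⊆ B ∩ K ∧ Bᶜ ∩ K ⊆ Aᶜ ∩ H

lemma ind_nonneg {α : Type*} (S : Set α) (x : α) : 0 ≤ ind S x :=
  indicator_nonneg (fun _ _ => zero_le_one) x

lemma ind_le_one {α : Type*} (S : Set α) (x : α) : ind S x ≤ 1 :=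
  indicator_le_self' (fun _ _ => zero_le_one) x

section ConditionalEvents

variable {P : Measure Ω} {A H B K C S : Set Ω} {ω : Ω}

lemma condEvent_nonneg : 0 ≤ condEvent P A H ω :=
  add_nonneg (ind_nonneg _ _) <|
    mul_nonneg (div_nonneg ENNReal.toReal_nonneg ENNReal.toReal_nonneg) (ind_nonneg _ _)

lemma condEvent_of_mem (hω : ω ∈ H) : condEvent P A H ω = ind A ω := by
  simp [condEvent, ind, indicator, hω]

lemma condProb_pos [IsFiniteMeasure P] (h : 0 < P (A ∩ H)) : 0 < condProb P A H :=
  div_pos (ENNReal.toReal_pos h.ne' (measure_ne_top P _)) <|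
    ENNReal.toReal_pos (h.trans_le (measure_mono inter_subset_right)).ne' (measure_ne_top P _)

lemma min_condEvent_inter_mul_ind :
    min (condEvent P A (K ∩ B) ω) (condEvent P B K ω) * ind K ω = ind (A ∩ B ∩ K) ω := by
  by_cases hK : ω ∈ K
  · by_cases hB : ω ∈ B
    · rw [condEvent_of_mem (H := K ∩ B) ⟨hK, hB⟩, condEvent_of_mem hK,
        show ind B ω = 1 by simp [ind, hB], min_eq_left (ind_le_one _ _)]
      simp [ind, indicator, hK, hB]
    · rw [condEvent_of_mem (P := P) (A := B) hK,
        min_eq_right (by simpa [ind, hB] using condEvent_nonneg)]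
      simp [ind, hB]
  · simp [ind, hK]

lemma min_condEvent_mul_ind_of_inter_subset (h : A ∩ H ⊆ B ∩ K) :
    min (condEvent P A H ω) (condEvent P B K ω) * ind H ω = ind (A ∩ H) ω := by
  by_cases hH : ω ∈ H
  · by_cases hA : ω ∈ A
    · obtain ⟨hB, hK⟩ := h ⟨hA, hH⟩
      rw [condEvent_of_mem hH, condEvent_of_mem hK]
      simp [ind, hA, hB, hH]
    · rw [condEvent_of_mem hH, min_eq_left (by simpa [ind, hA] using condEvent_nonneg)]
      simp [ind, hA]
  · simp [ind, hH]

lemma conjPrev_eq_condProb (hC : MeasurableSet (C ∩ S)) (hS : H ∪ K = S)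
    (h : ∀ ω, min (condEvent P A H ω) (condEvent P B K ω) * ind S ω = ind (C ∩ S) ω) :
    conjPrev P A H B K = condProb P C S := by
  subst hS
  rw [conjPrev, integral_congr_ae (.of_forall h), ind, integral_indicator_one hC]
  rfl

lemma conjCE_eq_condEvent (hC : MeasurableSet (C ∩ S)) (hS : H ∪ K = S)
    (h : ∀ ω, min (condEvent P A H ω) (condEvent P B K ω) * ind S ω = ind (C ∩ S) ω) :
    conjCE P A H B K = condEvent P C S := by
  funext ω
  rw [conjCE, conjPrev_eq_condProb hC hS h, hS, h, condEvent]

end ConditionalEvents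

lemma iterCond_eq_one {P : Measure Ω} {A H B K : Set Ω}
    (hCE : conjCE P A H B K = condEvent P A H) (hz : conjPrev P A H B K = condProb P A H)
    (hp : condProb P A H ≠ 0) (ω : Ω) : iterCond P A H B K ω = 1 := by
  rw [iterCond, hCE, hz, div_self hp]
  ring

theorem bayes_rule_general (P : Measure Ω) [IsProbabilityMeasure P]
    (E H A : Set Ω)
    (hEm : MeasurableSet E) (hHm : MeasurableSet H) (hAm : MeasurableSet A) :
    (∀ ω, conjCE P E (A ∩ H) H A ω = condEvent P (E ∩ H) A ω) ∧
      (0 < P (A ∩ E ∩ H) → ∀ ω, iterCond P (E ∩ H) A H (E ∩ A) ω = 1) := by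
  have hm : MeasurableSet (E ∩ H ∩ A) := (hEm.inter hHm).inter hAm
  have hA : A ∪ E ∩ A = A := union_eq_left.2 inter_subset_right
  have hmin : ∀ ω, min (condEvent P (E ∩ H) A ω) (condEvent P H (E ∩ A) ω) * ind A ω =
      ind (E ∩ H ∩ A) ω := fun ω =>
    min_condEvent_mul_ind_of_inter_subset fun _ h => ⟨h.1.2, h.1.1, h.2⟩
  refine ⟨congrFun (conjCE_eq_condEvent hm (union_eq_right.2 inter_subset_left)
    fun _ => min_condEvent_inter_mul_ind), fun hpos => ?_⟩
  refine iterCond_eq_one (conjCE_eq_condEvent hm hA hmin) (conjPrev_eq_condProb hm hA hmin)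
    (condProb_pos ?_).ne'
  rwa [show E ∩ H ∩ A = A ∩ E ∩ H by rw [inter_comm, inter_assoc]]

/-- Bayes: `⟦(E|(A∩H))∧(H|A)⟧ = ⟦(E∩H)|A⟧` pointwise; moreover, if
`P(A∩E∩H) > 0`, then `⟦(H|(E∩A))|((E∩H)|A)⟧` is constantly `1`. -/
theorem bayes_rule (P : Measure Ω) [IsProbabilityMeasure P]
    (E H A : Set Ω)
    (hEm : MeasurableSet E) (hHm : MeasurableSet H) (hAm : MeasurableSet A)
    (hAH : 0 < P (A ∩ H)) :
    (∀ ω, conjCE P E (A ∩ H) H A ω = condEvent P (E ∩ H) A ω) ∧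
      (0 < P (A ∩ E ∩ H) → ∀ ω, iterCond P (E ∩ H) A H (E ∩ A) ω = 1) :=
  bayes_rule_general P E H A hEm hHm hAm

end
end

section
/- Main theorem, case H3 ⊆ E3: for events E1, H1, E2, H2, E3, H3 with P(Hi) > 0 for i = 1, 2, 3, if H3 ⊆ E3, then the triple conjunction satisfies C3(ω) = C12(ω) for every ω ∈ Ω (where C12 := ⟦(E1|H1)∧(E2|H2)⟧) and x123 = x12; consequently, if x12 > 0, the iterated conditional satisfies ⟦(E3|H3)|((E1|H1)∧(E2|H2))⟧(ω) = 1 for every ω ∈ Ω. -/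
open MeasureTheory Set
open scoped Classical

noncomputable section

variable {Ω : Type*} [MeasurableSpace Ω]

/-- Triple conjunction `⟦(E1|H1)∧(E2|H2)∧(E3|H3)⟧`, defined piecewise, except that
on `H1ᶜ∩H2ᶜ∩H3ᶜ` it is set to `0` (it is irrelevant there for computing `x123`). -/
def c3base (P : Measure Ω) (E1 H1 E2 H2 E3 H3 : Set Ω) : Ω → ℝ := fun ω =>
  if ω ∈ E1 ∩ H1 ∩ (E2 ∩ H2) ∩ (E3 ∩ H3) then 1
  else if ω ∈ (E1ᶜ ∩ H1) ∪ (E2ᶜ ∩ H2) ∪ (E3ᶜ ∩ H3) then 0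
  else if ω ∈ H1ᶜ ∩ (E2 ∩ H2) ∩ (E3 ∩ H3) then condProb P E1 H1
  else if ω ∈ H2ᶜ ∩ (E1 ∩ H1) ∩ (E3 ∩ H3) then condProb P E2 H2
  else if ω ∈ H3ᶜ ∩ (E1 ∩ H1) ∩ (E2 ∩ H2) then condProb P E3 H3
  else if ω ∈ H1ᶜ ∩ H2ᶜ ∩ (E3 ∩ H3) then conjPrev P E1 H1 E2 H2
  else if ω ∈ H1ᶜ ∩ H3ᶜ ∩ (E2 ∩ H2) then conjPrev P E1 H1 E3 H3
  else if ω ∈ H2ᶜ ∩ H3ᶜ ∩ (E1 ∩ H1) then conjPrev P E2 H2 E3 H3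
  else 0

/-- The prevision `x123 = E[C3·1_{H1∪H2∪H3}]/P(H1∪H2∪H3)` of the triple conjunction. -/
def x123 (P : Measure Ω) (E1 H1 E2 H2 E3 H3 : Set Ω) : ℝ :=
  (∫ ω, c3base P E1 H1 E2 H2 E3 H3 ω * ind (H1 ∪ H2 ∪ H3) ω ∂P) /
    (P (H1 ∪ H2 ∪ H3)).toReal

/-- The triple conjunction `C3 = ⟦(E1|H1)∧(E2|H2)∧(E3|H3)⟧`, equal to `x123` on
`H1ᶜ∩H2ᶜ∩H3ᶜ` and given piecewise by `c3base` elsewhere. -/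
def c3 (P : Measure Ω) (E1 H1 E2 H2 E3 H3 : Set Ω) : Ω → ℝ := fun ω =>
  if ω ∈ H1ᶜ ∩ H2ᶜ ∩ H3ᶜ then x123 P E1 H1 E2 H2 E3 H3
  else c3base P E1 H1 E2 H2 E3 H3 ω

/-- The iterated conditional `⟦(E3|H3)|((E1|H1)∧(E2|H2))⟧ = C3 + μ·(1 − C12)`,
where `μ = x123/x12` and `C12 = ⟦(E1|H1)∧(E2|H2)⟧`. -/
def iter3 (P : Measure Ω) (E1 H1 E2 H2 E3 H3 : Set Ω) : Ω → ℝ := fun ω =>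
  c3 P E1 H1 E2 H2 E3 H3 ω +
    (x123 P E1 H1 E2 H2 E3 H3 / conjPrev P E1 H1 E2 H2) *
      (1 - conjCE P E1 H1 E2 H2 ω)

/-!
If `H3 ⊆ E3` then `P(E3|H3) = 1`, so `⟦E3|H3⟧` is the constant `1` and conjoining with it changes
nothing: `x13 = x1`, `x23 = x2`, and the piecewise `C3` agrees with `C12` on `H1 ∪ H2 ∪ H3`.
Like every conditional random quantity, `C12` equals its prevision `x12` off its conditioning event
`H1 ∪ H2`, so its expectation restricted to any `S ⊇ H1 ∪ H2` is `x12 · P(S)`. Taking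
`S = H1 ∪ H2 ∪ H3` gives `x123 = x12`, hence `C3 = C12` everywhere, and the iterated conditional
is `C12 + 1 · (1 - C12) = 1`.
-/

section ConditionalEvents

variable {P : Measure Ω} {A H B K S : Set Ω} {ω : Ω}

omit [MeasurableSpace Ω] in
lemma ind_of_mem (h : ω ∈ S) : ind S ω = 1 := indicator_of_mem h 1

omit [MeasurableSpace Ω] in
lemma ind_of_notMem (h : ω ∉ S) : ind S ω = 0 := indicator_of_notMem h 1

lemma integrable_ind [IsFiniteMeasure P] (hS : MeasurableSet S) : Integrable (ind S) P :=
  (integrable_const 1).indicator hS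

lemma integral_ind (hS : MeasurableSet S) : ∫ ω, ind S ω ∂P = (P S).toReal :=
  integral_indicator_one hS

lemma MeasureTheory.Integrable.mul_ind {f : Ω → ℝ} (hf : Integrable f P) (hS : MeasurableSet S) :
    Integrable (fun ω => f ω * ind S ω) P := by
  refine (hf.indicator hS).congr (Filter.Eventually.of_forall fun ω => ?_)
  by_cases h : ω ∈ S <;> simp [ind, h]

lemma integral_mul_ind_of_eq_off [IsFiniteMeasure P] {f : Ω → ℝ} {c : ℝ}
    (hH : MeasurableSet H) (hS : MeasurableSet S) (hHS : H ⊆ S)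
    (hf : Integrable (fun ω => f ω * ind H ω) P) (hfc : ∀ ω ∉ H, f ω = c)
    (hfH : ∫ ω, f ω * ind H ω ∂P = c * (P H).toReal) :
    ∫ ω, f ω * ind S ω ∂P = c * (P S).toReal := by
  have hsplit : (fun ω => f ω * ind S ω) = fun ω => f ω * ind H ω + c * ind (S \ H) ω := by
    funext ω
    by_cases hωH : ω ∈ H
    · simp [ind, hωH, hHS hωH]
    · by_cases hωS : ω ∈ S <;> simp [ind, hωH, hωS, hfc ω hωH]
  rw [hsplit, integral_add hf ((integrable_ind (hS.diff hH)).const_mul c), integral_const_mul,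
    integral_ind (hS.diff hH), hfH, ← mul_add]
  congr 1
  change P.real H + P.real (S \ H) = P.real S
  rw [measureReal_add_sdiff hH, union_eq_right.mpr hHS]

lemma condProb_nonneg (P : Measure Ω) (A H : Set Ω) : 0 ≤ condProb P A H :=
  div_nonneg ENNReal.toReal_nonneg ENNReal.toReal_nonneg

lemma condProb_le_one [IsFiniteMeasure P] (A H : Set Ω) : condProb P A H ≤ 1 :=
  div_le_one_of_le₀ (ENNReal.toReal_mono (measure_ne_top P H) (measure_mono inter_subset_right))
    ENNReal.toReal_nonneg

lemma condProb_mul_measure [IsFiniteMeasure P] (hH : P H ≠ 0) :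
    condProb P A H * (P H).toReal = (P (A ∩ H)).toReal :=
  div_mul_cancel₀ _ (ENNReal.toReal_ne_zero.mpr ⟨hH, measure_ne_top P H⟩)

lemma condProb_eq_one_of_subset [IsFiniteMeasure P] (hH : P H ≠ 0) (hHA : H ⊆ A) :
    condProb P A H = 1 := by
  rw [condProb, inter_eq_right.mpr hHA]
  exact div_self (ENNReal.toReal_ne_zero.mpr ⟨hH, measure_ne_top P H⟩)

lemma condEvent_of_mem_of_mem (hA : ω ∈ A) (hH : ω ∈ H) : condEvent P A H ω = 1 := by
  simp [condEvent, ind_of_mem (mem_inter hA hH), ind_of_notMem (notMem_compl_iff.mpr hH)]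

lemma condEvent_of_notMem_of_mem (hA : ω ∉ A) (hH : ω ∈ H) : condEvent P A H ω = 0 := by
  simp [condEvent, ind_of_notMem (fun h : ω ∈ A ∩ H => hA h.1),
    ind_of_notMem (notMem_compl_iff.mpr hH)]

lemma condEvent_of_notMem (hH : ω ∉ H) : condEvent P A H ω = condProb P A H := by
  simp [condEvent, ind_of_notMem (fun h : ω ∈ A ∩ H => hH h.2), ind_of_mem (mem_compl hH)]

lemma condEvent_le_one [IsFiniteMeasure P] (A H : Set Ω) (ω : Ω) : condEvent P A H ω ≤ 1 := by
  by_cases hH : ω ∈ H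
  · by_cases hA : ω ∈ A
    · rw [condEvent_of_mem_of_mem hA hH]
    · rw [condEvent_of_notMem_of_mem hA hH]
      exact zero_le_one
  · rw [condEvent_of_notMem hH]
    exact condProb_le_one A H

lemma condEvent_eq_one_of_subset [IsFiniteMeasure P] (hH : P H ≠ 0) (hHA : H ⊆ A) (ω : Ω) :
    condEvent P A H ω = 1 := by
  by_cases hωH : ω ∈ H
  · exact condEvent_of_mem_of_mem (hHA hωH) hωH
  · rw [condEvent_of_notMem hωH, condProb_eq_one_of_subset hH hHA]

lemma integrable_condEvent [IsFiniteMeasure P] (hA : MeasurableSet A) (hH : MeasurableSet H) :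
    Integrable (condEvent P A H) P :=
  (integrable_ind (hA.inter hH)).add ((integrable_ind hH.compl).const_mul _)

lemma integral_condEvent_mul_ind [IsFiniteMeasure P] (hA : MeasurableSet A)
    (hH : MeasurableSet H) (hS : MeasurableSet S) (hHS : H ⊆ S) (hH0 : P H ≠ 0) :
    ∫ ω, condEvent P A H ω * ind S ω ∂P = condProb P A H * (P S).toReal := by
  have hon : (fun ω => condEvent P A H ω * ind H ω) = ind (A ∩ H) := by
    funext ω
    by_cases hωH : ω ∈ H
    · by_cases hωA : ω ∈ A
      · simp [condEvent_of_mem_of_mem hωA hωH, ind_of_mem hωH, ind_of_mem (mem_inter hωA hωH)]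
      · simp [condEvent_of_notMem_of_mem hωA hωH, ind_of_notMem (fun h : ω ∈ A ∩ H => hωA h.1)]
    · simp [ind_of_notMem hωH, ind_of_notMem (fun h : ω ∈ A ∩ H => hωH h.2)]
  refine integral_mul_ind_of_eq_off hH hS hHS ?_ (fun ω hω => condEvent_of_notMem hω) ?_
  · rw [hon]
    exact integrable_ind (hA.inter hH)
  · rw [hon, integral_ind (hA.inter hH), condProb_mul_measure hH0]

end ConditionalEvents

section Conjunction

variable {P : Measure Ω} {A H B K S : Set Ω} {ω : Ω}

lemma conjCE_of_mem_union (h : ω ∈ H ∪ K) :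
    conjCE P A H B K ω = min (condEvent P A H ω) (condEvent P B K ω) := by
  rw [conjCE, ind_of_mem h, ind_of_notMem (notMem_compl_iff.mpr h), mul_one, mul_zero, add_zero]

lemma conjCE_of_notMem_union (h : ω ∉ H ∪ K) : conjCE P A H B K ω = conjPrev P A H B K := by
  rw [conjCE, ind_of_notMem h, ind_of_mem (mem_compl h), mul_zero, zero_add, mul_one]

lemma conjPrev_eq_condProb_of_subset [IsFiniteMeasure P] (hA : MeasurableSet A)
    (hH : MeasurableSet H) (hK : MeasurableSet K) (hH0 : P H ≠ 0) (hK0 : P K ≠ 0)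
    (hKB : K ⊆ B) : conjPrev P A H B K = condProb P A H := by
  have hHK : (P (H ∪ K)).toReal ≠ 0 := ENNReal.toReal_ne_zero.mpr
    ⟨fun h0 => hH0 (measure_mono_null subset_union_left h0), measure_ne_top _ _⟩
  simp only [conjPrev, condEvent_eq_one_of_subset hK0 hKB, min_eq_left (condEvent_le_one _ _ _)]
  rw [integral_condEvent_mul_ind hA hH (hH.union hK) subset_union_left hH0,
    mul_div_assoc, div_self hHK, mul_one]

lemma integral_conjCE_mul_ind [IsFiniteMeasure P] (hA : MeasurableSet A) (hH : MeasurableSet H)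
    (hB : MeasurableSet B) (hK : MeasurableSet K) (hS : MeasurableSet S) (hHKS : H ∪ K ⊆ S)
    (hHK : P (H ∪ K) ≠ 0) :
    ∫ ω, conjCE P A H B K ω * ind S ω ∂P = conjPrev P A H B K * (P S).toReal := by
  have hon : (fun ω => conjCE P A H B K ω * ind (H ∪ K) ω)
      = fun ω => min (condEvent P A H ω) (condEvent P B K ω) * ind (H ∪ K) ω := by
    funext ω
    by_cases h : ω ∈ H ∪ K
    · rw [conjCE_of_mem_union h]
    · simp [ind_of_notMem h]
  refine integral_mul_ind_of_eq_off (hH.union hK) hS hHKS ?_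
    (fun ω hω => conjCE_of_notMem_union hω) ?_
  · rw [hon]
    exact ((integrable_condEvent hA hH).inf (integrable_condEvent hB hK)).mul_ind (hH.union hK)
  · rw [hon, conjPrev, div_mul_cancel₀ _ (ENNReal.toReal_ne_zero.mpr ⟨hHK, measure_ne_top _ _⟩)]

end Conjunction

section TripleConjunction

variable {P : Measure Ω} {E1 H1 E2 H2 E3 H3 : Set Ω}

lemma c3base_eq_conjCE_of_subset [IsFiniteMeasure P]
    (hE1 : MeasurableSet E1) (hH1 : MeasurableSet H1)
    (hE2 : MeasurableSet E2) (hH2 : MeasurableSet H2) (hH3 : MeasurableSet H3)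
    (h1 : P H1 ≠ 0) (h2 : P H2 ≠ 0) (h3 : P H3 ≠ 0) (hsub : H3 ⊆ E3)
    {ω : Ω} (hω : ω ∈ H1 ∪ H2 ∪ H3) :
    c3base P E1 H1 E2 H2 E3 H3 ω = conjCE P E1 H1 E2 H2 ω := by
  have hx3 : condProb P E3 H3 = 1 := condProb_eq_one_of_subset h3 hsub
  have hx13 : conjPrev P E1 H1 E3 H3 = condProb P E1 H1 :=
    conjPrev_eq_condProb_of_subset hE1 hH1 hH3 h1 h3 hsub
  have hx23 : conjPrev P E2 H2 E3 H3 = condProb P E2 H2 :=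
    conjPrev_eq_condProb_of_subset hE2 hH2 hH3 h2 h3 hsub
  have hx1_nonneg := condProb_nonneg P E1 H1
  have hx2_nonneg := condProb_nonneg P E2 H2
  have hx1_le_one := condProb_le_one (P := P) E1 H1
  have hx2_le_one := condProb_le_one (P := P) E2 H2
  have e3 : ω ∈ H3 → ω ∈ E3 := fun h => hsub h
  by_cases h12 : ω ∈ H1 ∪ H2
  · rw [conjCE_of_mem_union h12]
    by_cases m1 : ω ∈ H1 <;> by_cases m2 : ω ∈ H2 <;> by_cases m3 : ω ∈ H3 <;>
      by_cases e1 : ω ∈ E1 <;> by_cases e2 : ω ∈ E2 <;>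
      simp_all [c3base, condEvent_of_mem_of_mem, condEvent_of_notMem_of_mem, condEvent_of_notMem]
  · rw [conjCE_of_notMem_union h12]
    simp_all [c3base]

lemma x123_eq_conjPrev_of_subset [IsFiniteMeasure P]
    (hE1 : MeasurableSet E1) (hH1 : MeasurableSet H1)
    (hE2 : MeasurableSet E2) (hH2 : MeasurableSet H2) (hH3 : MeasurableSet H3)
    (h1 : P H1 ≠ 0) (h2 : P H2 ≠ 0) (h3 : P H3 ≠ 0) (hsub : H3 ⊆ E3) :
    x123 P E1 H1 E2 H2 E3 H3 = conjPrev P E1 H1 E2 H2 := by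
  have hU0 : (P (H1 ∪ H2 ∪ H3)).toReal ≠ 0 := ENNReal.toReal_ne_zero.mpr
    ⟨fun h0 => h1 (measure_mono_null (subset_union_left.trans subset_union_left) h0),
      measure_ne_top _ _⟩
  have hon : (fun ω => c3base P E1 H1 E2 H2 E3 H3 ω * ind (H1 ∪ H2 ∪ H3) ω)
      = fun ω => conjCE P E1 H1 E2 H2 ω * ind (H1 ∪ H2 ∪ H3) ω := by
    funext ω
    by_cases hω : ω ∈ H1 ∪ H2 ∪ H3
    · rw [c3base_eq_conjCE_of_subset hE1 hH1 hE2 hH2 hH3 h1 h2 h3 hsub hω]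
    · simp [ind_of_notMem hω]
  rw [x123, hon, integral_conjCE_mul_ind hE1 hH1 hE2 hH2 ((hH1.union hH2).union hH3)
    subset_union_left (fun h0 => h1 (measure_mono_null subset_union_left h0)),
    mul_div_assoc, div_self hU0, mul_one]

lemma c3_eq_conjCE_of_subset [IsFiniteMeasure P]
    (hE1 : MeasurableSet E1) (hH1 : MeasurableSet H1)
    (hE2 : MeasurableSet E2) (hH2 : MeasurableSet H2) (hH3 : MeasurableSet H3)
    (h1 : P H1 ≠ 0) (h2 : P H2 ≠ 0) (h3 : P H3 ≠ 0) (hsub : H3 ⊆ E3) (ω : Ω) :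
    c3 P E1 H1 E2 H2 E3 H3 ω = conjCE P E1 H1 E2 H2 ω := by
  by_cases hω : ω ∈ H1ᶜ ∩ H2ᶜ ∩ H3ᶜ
  · rw [c3, if_pos hω, x123_eq_conjPrev_of_subset hE1 hH1 hE2 hH2 hH3 h1 h2 h3 hsub,
      conjCE_of_notMem_union (fun h => h.elim hω.1.1 hω.1.2)]
  · have hU : ω ∈ H1 ∪ H2 ∪ H3 := by
      simp only [mem_inter_iff, mem_compl_iff, mem_union] at hω ⊢
      tauto
    rw [c3, if_neg hω, c3base_eq_conjCE_of_subset hE1 hH1 hE2 hH2 hH3 h1 h2 h3 hsub hU]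

end TripleConjunction

theorem main_case_subset_general (P : Measure Ω) [IsProbabilityMeasure P]
    (E1 H1 E2 H2 E3 H3 : Set Ω)
    (hE1 : MeasurableSet E1) (hH1 : MeasurableSet H1)
    (hE2 : MeasurableSet E2) (hH2 : MeasurableSet H2)
    (hH3 : MeasurableSet H3)
    (h1 : 0 < P H1) (h2 : 0 < P H2) (h3 : 0 < P H3)
    (hsub : H3 ⊆ E3) :
    (∀ ω, c3 P E1 H1 E2 H2 E3 H3 ω = conjCE P E1 H1 E2 H2 ω) ∧
      x123 P E1 H1 E2 H2 E3 H3 = conjPrev P E1 H1 E2 H2 ∧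
      (0 < conjPrev P E1 H1 E2 H2 →
        ∀ ω, iter3 P E1 H1 E2 H2 E3 H3 ω = 1) := by
  have hc3 := c3_eq_conjCE_of_subset hE1 hH1 hE2 hH2 hH3 h1.ne' h2.ne' h3.ne' hsub
  have hx123 := x123_eq_conjPrev_of_subset hE1 hH1 hE2 hH2 hH3 h1.ne' h2.ne' h3.ne' hsub
  refine ⟨hc3, hx123, fun hx12 ω => ?_⟩
  rw [iter3, hc3, hx123, div_self hx12.ne', one_mul, add_sub_cancel]

/-- Main theorem, case `H3 ⊆ E3`: the triple conjunction `C3` coincides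
pointwise with `C12 = ⟦(E1|H1)∧(E2|H2)⟧` and `x123 = x12`; consequently, if
`x12 > 0`, the iterated conditional `⟦(E3|H3)|((E1|H1)∧(E2|H2))⟧` is
constantly `1`. -/
theorem main_case_subset (P : Measure Ω) [IsProbabilityMeasure P]
    (E1 H1 E2 H2 E3 H3 : Set Ω)
    (hE1 : MeasurableSet E1) (hH1 : MeasurableSet H1)
    (hE2 : MeasurableSet E2) (hH2 : MeasurableSet H2)
    (hE3 : MeasurableSet E3) (hH3 : MeasurableSet H3)
    (h1 : 0 < P H1) (h2 : 0 < P H2) (h3 : 0 < P H3)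
    (hsub : H3 ⊆ E3) :
    (∀ ω, c3 P E1 H1 E2 H2 E3 H3 ω = conjCE P E1 H1 E2 H2 ω) ∧
      x123 P E1 H1 E2 H2 E3 H3 = conjPrev P E1 H1 E2 H2 ∧
      (0 < conjPrev P E1 H1 E2 H2 →
        ∀ ω, iter3 P E1 H1 E2 H2 E3 H3 ω = 1) :=
  main_case_subset_general P E1 H1 E2 H2 E3 H3 hE1 hH1 hE2 hH2 hH3 h1 h2 h3 hsub

end
end
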